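/- arXiv:2106.12886 — 5 statements merged into one kernel-verified Lean document; each statement's English description precedes it below -/
import Mathlib

section
/- For the hinge loss φ_h(α) = c·max{0, 1−α} with c > 0, and for η ∈ [0,1], define C_φ(a, η) = φ(a)·η + φ(−a)·(1−η), C⁺(η) = inf over a ∈ [0,1] of C_φ(a, η), and C⁻(η) = inf over a ∈ [−1, 0) of C_φ(a, η). Then C⁺(η) − C⁻(η) = c·(1 − 2η) for all η ∈ [0,1]. -/
open Set

/-!
On `[-1, 1]` both hinges are active, so `a ↦ C a η` is the affine map `a ↦ c + c (1 - 2η) a`.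
An affine map attains its infimum over `[0, 1]` at an endpoint, and its infimum over `[-1, 0)`
is the same as over `[-1, 0]` by continuity; the difference of the two endpoint minima is the
slope `c (1 - 2η)`.
-/

theorem ContinuousOn.sInf_image_Ico_eq_sInf_image_Icc
    {α β : Type*} [ConditionallyCompleteLinearOrder α] [TopologicalSpace α] [OrderTopology α]
    [DenselyOrdered α] [ConditionallyCompleteLinearOrder β] [TopologicalSpace β]
    [OrderTopology β] {f : α → β} {x y : α} (hf : ContinuousOn f (Icc x y)) (hxy : x < y) :
    sInf (f '' Ico x y) = sInf (f '' Icc x y) := by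
  have hclosure : f '' Icc x y ⊆ closure (f '' Ico x y) := by
    rw [← closure_Ico hxy.ne] at hf ⊢
    exact hf.image_closure
  have hglb : IsGLB (f '' Icc x y) (sInf (f '' Icc x y)) :=
    (isCompact_Icc.image_of_continuousOn hf).isGLB_sInf ((nonempty_Icc.2 hxy.le).image f)
  exact ((isGLB_iff_of_subset_of_subset_closure (image_mono Ico_subset_Icc_self)
    hclosure).2 hglb).csInf_eq ((nonempty_Ico.2 hxy).image f)

theorem sInf_image_affine_Icc {p q x y : ℝ} (hxy : x ≤ y) :
    sInf ((fun a => p + q * a) '' Icc x y) = min (p + q * x) (p + q * y) := by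
  rcases le_total 0 q with hq | hq
  · have hmono : Monotone fun a => p + q * a := fun a b hab => by dsimp only; gcongr
    rw [(hmono.monotoneOn _).sInf_image_Icc hxy, min_eq_left (hmono hxy)]
  · have hanti : Antitone fun a => p + q * a := fun a b hab => by
      dsimp only; nlinarith
    rw [(hanti.antitoneOn _).sInf_image_Icc hxy, min_eq_right (hanti hxy)]

theorem hinge_deltaC_general (c : ℝ) (φ : ℝ → ℝ)
    (hφ : ∀ α, φ α = c * max 0 (1 - α))
    (C : ℝ → ℝ → ℝ)
    (hC : ∀ a η, C a η = φ a * η + φ (-a) * (1 - η)) :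
    ∀ η ∈ Icc (0:ℝ) 1,
      sInf ((fun a => C a η) '' Icc (0:ℝ) 1) -
        sInf ((fun a => C a η) '' Ico (-1:ℝ) 0) = c * (1 - 2 * η) := by
  intro η _
  set t := c * (1 - 2 * η)
  have hC_affine : EqOn (fun a => C a η) (fun a => c + t * a) (Icc (-1) 1) := by
    rintro a ⟨ha₁, ha₂⟩
    simp only [hC, hφ, max_eq_right (sub_nonneg.2 ha₂),
      max_eq_right (by linarith : (0:ℝ) ≤ 1 - -a)]
    ring
  rw [(hC_affine.mono (Icc_subset_Icc_left (by norm_num))).image_eq,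
    (hC_affine.mono (Ico_subset_Icc_self.trans (Icc_subset_Icc_right zero_le_one))).image_eq,
    ContinuousOn.sInf_image_Ico_eq_sInf_image_Icc (by fun_prop) (by norm_num),
    sInf_image_affine_Icc zero_le_one, sInf_image_affine_Icc (by norm_num)]
  rcases le_total 0 t with ht | ht
  · rw [min_eq_left (by linarith), min_eq_left (by linarith)]; ring
  · rw [min_eq_right (by linarith), min_eq_right (by linarith)]; ring

/-- For the hinge loss `φ α = c * max 0 (1 - α)` with `c > 0`, the gap between the
constrained infima of the conditional risk `C a η = φ a * η + φ (-a) * (1 - η)`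
over `a ∈ [0,1]` and over `a ∈ [-1,0)` equals `c * (1 - 2η)` for every `η ∈ [0,1]`. -/
theorem hinge_deltaC (c : ℝ) (hc : 0 < c) (φ : ℝ → ℝ)
    (hφ : ∀ α, φ α = c * max 0 (1 - α))
    (C : ℝ → ℝ → ℝ)
    (hC : ∀ a η, C a η = φ a * η + φ (-a) * (1 - η)) :
    ∀ η ∈ Icc (0:ℝ) 1,
      sInf ((fun a => C a η) '' Icc (0:ℝ) 1) -
        sInf ((fun a => C a η) '' Ico (-1:ℝ) 0) = c * (1 - 2 * η) :=
  hinge_deltaC_general c φ hφ C hC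
end

section
/- Generalized Zhang inequality: Let μ be a probability measure on X, η : X → [0,1] measurable, 𝒢 a class of measurable subsets of X, and φ a surrogate loss with ΔC_φ(η) = c(1 − 2η) for some c > 0 and all η ∈ [0,1]. Let 𝓕_𝒢 be the class of measurable f : X → [−1, 1] whose 0-level set G_f = {x : f(x) ≥ 0} belongs to 𝒢. Then for every f ∈ 𝓕_𝒢, c·( R(f) − inf_{g ∈ 𝓕_𝒢} R(g) ) ≤ R_φ(f) − inf_{g ∈ 𝓕_𝒢} R_φ(g), where R(f) = E[1{Y·sign(f(X)) ≤ 0}] is the classification risk and R_φ(f) = E[φ(Y f(X))] is the surrogate risk. -/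
/-!
Both risks are integrals of conditional risks at `η(x)`. Among scores of a fixed sign, the least
conditional `φ`-risk is `H₊(η)` on `[0, 1]` and `H₋(η)` on `[-1, 0)`, and the hypothesis
`H₊ - H₋ = c (1 - 2η)` says that, up to a term not depending on the sign, this sign-restricted
optimum is `c` times the conditional `0-1` risk of that sign. So for `f, g ∈ 𝓕_𝒢` we get
`c (R f - R g) ≤ R_φ f - R_φ k + ε`, where `k` has the prediction set of `g` (hence `k ∈ 𝓕_𝒢`) and
takes `ε`-optimal values on each side; `k` is made measurable by picking those values along a
dense sequence. Taking the infimum over `g` finishes the proof.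
-/

open MeasureTheory Set

noncomputable def sgn (a : ℝ) : ℝ := if 0 ≤ a then 1 else -1

open TopologicalSpace

lemma mul_sub_csInf_image_le {α : Type*} {F : Set α} {R : α → ℝ} {c D : ℝ} (hc : 0 < c)
    {f : α} (hf : f ∈ F) (h : ∀ g ∈ F, c * (R f - R g) ≤ D) : c * (R f - sInf (R '' F)) ≤ D := by
  have hinf : R f - D / c ≤ sInf (R '' F) := by
    refine le_csInf ⟨R f, f, hf, rfl⟩ ?_
    rintro _ ⟨g, hg, rfl⟩
    rw [sub_le_comm, le_div_iff₀' hc]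
    exact h g hg
  calc c * (R f - sInf (R '' F)) ≤ c * (D / c) := by gcongr; linarith
    _ = D := mul_div_cancel₀ D hc.ne'

section Selection

variable {Y : Type*} [TopologicalSpace Y] {S : Set Y} [SeparableSpace S]

lemma exists_denseSeq_lt_of_csInf_lt [Nonempty S] {h : Y → ℝ} (hh : ContinuousOn h S)
    (hbdd : BddBelow (h '' S)) {b : ℝ} (hb : sInf (h '' S) < b) :
    ∃ n, h (denseSeq S n) < b := by
  obtain ⟨_, ⟨a, ha, rfl⟩, hab⟩ := (csInf_lt_iff hbdd (Nonempty.image h .of_subtype)).1 hb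
  exact (denseRange_denseSeq S).exists_mem_open (isOpen_lt hh.domRestrict continuous_const)
    ⟨⟨a, ha⟩, hab⟩

lemma exists_measurable_lt_csInf_add {Ω : Type*} [MeasurableSpace Ω] [MeasurableSpace Y]
    (hS : S.Nonempty) {C : Y → Ω → ℝ} (hcont : ∀ ω, ContinuousOn (C · ω) S)
    (hmeas : ∀ y, Measurable (C y)) (hbdd : ∀ ω, BddBelow ((C · ω) '' S)) {ε : ℝ} (hε : 0 < ε) :
    ∃ σ : Ω → Y, Measurable σ ∧ ∀ ω, σ ω ∈ S ∧ C (σ ω) ω < sInf ((C · ω) '' S) + ε := by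
  classical
  have := hS.to_subtype
  have hnear : ∀ ω, ∃ n, C (denseSeq S n) ω < sInf ((C · ω) '' S) + ε / 2 := fun ω =>
    exists_denseSeq_lt_of_csInf_lt (hcont ω) (hbdd ω) (by linarith)
  -- Comparing only with the sequence itself keeps the selection criterion measurable.
  have hex : ∀ ω, ∃ n, ∀ m, C (denseSeq S n) ω ≤ C (denseSeq S m) ω + ε / 2 := fun ω => by
    obtain ⟨n, hn⟩ := hnear ω
    exact ⟨n, fun m => by linarith [csInf_le (hbdd ω) ⟨_, (denseSeq S m).2, rfl⟩]⟩
  have hset : ∀ n, MeasurableSet {ω | ∀ m, C (denseSeq S n) ω ≤ C (denseSeq S m) ω + ε / 2} :=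
    fun n => by
      simp only [ofPred_forall]
      exact .iInter fun m => measurableSet_le (hmeas _) ((hmeas _).add_const _)
  refine ⟨fun ω => denseSeq S (Nat.find (hex ω)),
    Measurable.find (f := fun n _ => (denseSeq S n : Y)) (fun _ => measurable_const) hset hex,
    fun ω => ⟨(denseSeq S _).2, ?_⟩⟩
  obtain ⟨m, hm⟩ := hnear ω
  linarith [Nat.find_spec (hex ω) m]

end Selection

noncomputable section

/-- The conditional `φ`-risk `C_φ(a, η)`. -/
def condRisk (φ : ℝ → ℝ) (a p : ℝ) : ℝ := φ a * p + φ (-a) * (1 - p)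

/-- The conditional `0-1` risk of predicting `sign a` when `P(Y = 1) = p`. -/
def condZeroOneRisk (a p : ℝ) : ℝ := if 0 ≤ a then 1 - p else p

def scoreSide (a : ℝ) : Set ℝ := if 0 ≤ a then Icc 0 1 else Ico (-1) 0

/-- `sideInf φ 0 p` and `sideInf φ (-1) p` are the two infima in `ΔC_φ(p)`. -/
def sideInf (φ : ℝ → ℝ) (a p : ℝ) : ℝ := sInf ((condRisk φ · p) '' scoreSide a)

end

lemma scoreSide_subset_Icc (a : ℝ) : scoreSide a ⊆ Icc (-1) 1 := by
  unfold scoreSide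
  split_ifs
  · exact Icc_subset_Icc (by norm_num) le_rfl
  · exact Ico_subset_Icc_self.trans (Icc_subset_Icc le_rfl (by norm_num))

lemma scoreSide_nonempty (a : ℝ) : (scoreSide a).Nonempty := by
  unfold scoreSide
  split_ifs
  · exact nonempty_Icc.2 zero_le_one
  · exact nonempty_Ico.2 (by norm_num)

lemma mem_scoreSide_self {a : ℝ} (ha : a ∈ Icc (-1) 1) : a ∈ scoreSide a := by
  unfold scoreSide
  split_ifs with h
  · exact ⟨h, ha.2⟩
  · exact ⟨ha.1, not_le.1 h⟩

lemma nonneg_iff_of_mem_scoreSide {a b : ℝ} (hb : b ∈ scoreSide a) : 0 ≤ b ↔ 0 ≤ a := by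
  unfold scoreSide at hb
  split_ifs at hb with h
  · exact iff_of_true hb.1 h
  · exact iff_of_false (not_le.2 hb.2) h

lemma condZeroOneRisk_eq (a p : ℝ) :
    p * (if (1:ℝ) * sgn a ≤ 0 then 1 else 0) + (1 - p) * (if (-1:ℝ) * sgn a ≤ 0 then 1 else 0)
      = condZeroOneRisk a p := by
  by_cases h : 0 ≤ a <;> norm_num [sgn, condZeroOneRisk, h]

section CondRisk

variable {φ : ℝ → ℝ}

lemma continuous_condRisk_left (hφ : Continuous φ) (p : ℝ) : Continuous (condRisk φ · p) := by
  unfold condRisk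
  fun_prop

lemma bddBelow_condRisk_image (hφ : Continuous φ) (a p : ℝ) :
    BddBelow ((condRisk φ · p) '' scoreSide a) :=
  (isCompact_Icc.image (continuous_condRisk_left hφ p)).bddBelow.mono
    (image_mono (scoreSide_subset_Icc a))

lemma sideInf_le_condRisk (hφ : Continuous φ) {a : ℝ} (ha : a ∈ Icc (-1) 1) (p : ℝ) :
    sideInf φ a p ≤ condRisk φ a p :=
  csInf_le (bddBelow_condRisk_image hφ a p) ⟨a, mem_scoreSide_self ha, rfl⟩

lemma abs_condRisk_le {M : ℝ} (hM : ∀ a ∈ Icc (-1:ℝ) 1, |φ a| ≤ M) {a p : ℝ}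
    (ha : a ∈ Icc (-1) 1) (hp : p ∈ Icc 0 1) : |condRisk φ a p| ≤ M := by
  have h₁ := abs_le.1 (hM a ha)
  have h₂ := abs_le.1 (hM (-a) ⟨by linarith [ha.2], by linarith [ha.1]⟩)
  obtain ⟨hp₀, hp₁⟩ := hp
  rw [abs_le, condRisk]
  constructor <;> nlinarith

lemma sideInf_sub_sideInf {c p : ℝ}
    (hΔ : sInf ((condRisk φ · p) '' Icc 0 1) - sInf ((condRisk φ · p) '' Ico (-1) 0)
      = c * (1 - 2 * p)) (a b : ℝ) :
    sideInf φ a p - sideInf φ b p = c * (condZeroOneRisk a p - condZeroOneRisk b p) := by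
  unfold sideInf scoreSide condZeroOneRisk
  split_ifs <;> linarith

lemma condZeroOneRisk_sub_le_condRisk_sub (hφ : Continuous φ) {c p ε a a' b : ℝ}
    (hΔ : sInf ((condRisk φ · p) '' Icc 0 1) - sInf ((condRisk φ · p) '' Ico (-1) 0)
      = c * (1 - 2 * p))
    (ha : a ∈ Icc (-1) 1) (hb : condRisk φ b p < sideInf φ a' p + ε) :
    c * (condZeroOneRisk a p - condZeroOneRisk a' p) ≤ condRisk φ a p - condRisk φ b p + ε := by
  linarith [sideInf_le_condRisk hφ ha p, sideInf_sub_sideInf hΔ a a']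

end CondRisk

section Risk

variable {X : Type*} [MeasurableSpace X] {μ : Measure X} [IsProbabilityMeasure μ] {η : X → ℝ}
  {φ : ℝ → ℝ} {f : X → ℝ}

lemma integrable_condRisk_comp (hφ : Continuous φ) {M : ℝ}
    (hM : ∀ a ∈ Icc (-1:ℝ) 1, |φ a| ≤ M) (hη : Measurable η) (hη01 : ∀ x, η x ∈ Icc 0 1)
    (hf : Measurable f) (hf1 : ∀ x, f x ∈ Icc (-1) 1) :
    Integrable (fun x => condRisk φ (f x) (η x)) μ := by
  refine .of_bound ?_ M (.of_forall fun x => abs_condRisk_le hM (hf1 x) (hη01 x))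
  unfold condRisk
  fun_prop

lemma integrable_condZeroOneRisk_comp (hη : Measurable η) (hη01 : ∀ x, η x ∈ Icc 0 1)
    (hf : Measurable f) : Integrable (fun x => condZeroOneRisk (f x) (η x)) μ := by
  refine .of_bound ?_ 1 (.of_forall fun x => ?_)
  · exact (Measurable.ite (measurableSet_le measurable_const hf) (measurable_const.sub hη)
      hη).aestronglyMeasurable
  · obtain ⟨h₀, h₁⟩ := hη01 x
    rw [Real.norm_eq_abs, abs_le, condZeroOneRisk]
    split_ifs <;> constructor <;> linarith

lemma exists_measurable_mem_scoreSide_lt_sideInf_add (hφ : Continuous φ) (hη : Measurable η)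
    {g : X → ℝ} (hg : Measurable g) {ε : ℝ} (hε : 0 < ε) :
    ∃ k : X → ℝ, Measurable k ∧
      ∀ x, k x ∈ scoreSide (g x) ∧ condRisk φ (k x) (η x) < sideInf φ (g x) (η x) + ε := by
  have hsel : ∀ a, ∃ σ : X → ℝ, Measurable σ ∧ ∀ x, σ x ∈ scoreSide a ∧
      condRisk φ (σ x) (η x) < sideInf φ a (η x) + ε := fun a =>
    exists_measurable_lt_csInf_add (scoreSide_nonempty a)
      (fun x => (continuous_condRisk_left hφ _).continuousOn)
      (fun _ => by unfold condRisk; fun_prop) (fun x => bddBelow_condRisk_image hφ a _) hε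
  obtain ⟨σp, hσp, hσpS⟩ := hsel 0
  obtain ⟨σm, hσm, hσmS⟩ := hsel (-1)
  refine ⟨fun x => if 0 ≤ g x then σp x else σm x,
    .ite (measurableSet_le measurable_const hg) hσp hσm, fun x => ?_⟩
  by_cases hx : 0 ≤ g x
  · simpa [hx, scoreSide, sideInf] using hσpS x
  · simpa [hx, scoreSide, sideInf, show ¬(0:ℝ) ≤ -1 by norm_num] using hσmS x

lemma abs_integral_condRisk_comp_le {M : ℝ} (hM : ∀ a ∈ Icc (-1:ℝ) 1, |φ a| ≤ M)
    (hη01 : ∀ x, η x ∈ Icc 0 1) (hf1 : ∀ x, f x ∈ Icc (-1) 1) :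
    |∫ x, condRisk φ (f x) (η x) ∂μ| ≤ M := by
  simpa using norm_integral_le_of_norm_le_const (μ := μ)
    (f := fun x => condRisk φ (f x) (η x)) (.of_forall fun x => abs_condRisk_le hM (hf1 x) (hη01 x))

lemma exists_mul_integral_condZeroOneRisk_sub_le (hφ : Continuous φ) {M c ε : ℝ}
    (hM : ∀ a ∈ Icc (-1:ℝ) 1, |φ a| ≤ M) (hη : Measurable η) (hη01 : ∀ x, η x ∈ Icc 0 1)
    (hΔ : ∀ p ∈ Icc (0:ℝ) 1,
      sInf ((condRisk φ · p) '' Icc 0 1) - sInf ((condRisk φ · p) '' Ico (-1) 0)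
        = c * (1 - 2 * p))
    (hf : Measurable f) (hf1 : ∀ x, f x ∈ Icc (-1) 1) {g : X → ℝ} (hg : Measurable g)
    (hε : 0 < ε) :
    ∃ k : X → ℝ, Measurable k ∧ (∀ x, k x ∈ scoreSide (g x)) ∧
      c * (∫ x, condZeroOneRisk (f x) (η x) ∂μ - ∫ x, condZeroOneRisk (g x) (η x) ∂μ)
        ≤ ∫ x, condRisk φ (f x) (η x) ∂μ - ∫ x, condRisk φ (k x) (η x) ∂μ + ε := by
  obtain ⟨k, hk, hkS⟩ := exists_measurable_mem_scoreSide_lt_sideInf_add hφ hη hg hε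
  have hk1 : ∀ x, k x ∈ Icc (-1) 1 := fun x => scoreSide_subset_Icc _ (hkS x).1
  have hCf := integrable_condRisk_comp (μ := μ) hφ hM hη hη01 hf hf1
  have hCk := integrable_condRisk_comp (μ := μ) hφ hM hη hη01 hk hk1
  refine ⟨k, hk, fun x => (hkS x).1, ?_⟩
  calc c * (∫ x, condZeroOneRisk (f x) (η x) ∂μ - ∫ x, condZeroOneRisk (g x) (η x) ∂μ)
      = ∫ x, c * (condZeroOneRisk (f x) (η x) - condZeroOneRisk (g x) (η x)) ∂μ := by
        rw [integral_const_mul, integral_sub (integrable_condZeroOneRisk_comp hη hη01 hf)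
          (integrable_condZeroOneRisk_comp hη hη01 hg)]
    _ ≤ ∫ x, (condRisk φ (f x) (η x) - condRisk φ (k x) (η x) + ε) ∂μ := by
        refine integral_mono (((integrable_condZeroOneRisk_comp hη hη01 hf).sub
          (integrable_condZeroOneRisk_comp hη hη01 hg)).const_mul c)
          ((hCf.sub hCk).add (integrable_const ε)) fun x => ?_
        exact condZeroOneRisk_sub_le_condRisk_sub hφ (hΔ _ (hη01 x)) (hf1 x) (hkS x).2
    _ = ∫ x, condRisk φ (f x) (η x) ∂μ - ∫ x, condRisk φ (k x) (η x) ∂μ + ε := by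
        rw [integral_add (f := fun x => condRisk φ (f x) (η x) - condRisk φ (k x) (η x))
          (hCf.sub hCk) (integrable_const ε), integral_sub hCf hCk]
        simp

end Risk

theorem generalized_zhang_inequality_general {X : Type*} [MeasurableSpace X]
    (μ : Measure X) [IsProbabilityMeasure μ]
    (η : X → ℝ) (hη : Measurable η) (hη01 : ∀ x, η x ∈ Icc (0:ℝ) 1)
    (𝒢 : Set (Set X))
    (φ : ℝ → ℝ) (hφc : Continuous φ) (c : ℝ) (hc : 0 < c)
    (hΔ : ∀ p ∈ Icc (0:ℝ) 1,
      sInf ((fun a => φ a * p + φ (-a) * (1 - p)) '' Icc (0:ℝ) 1) -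
        sInf ((fun a => φ a * p + φ (-a) * (1 - p)) '' Ico (-1:ℝ) 0)
          = c * (1 - 2 * p))
    (F : Set (X → ℝ))
    (hF : F = {f | Measurable f ∧ (∀ x, f x ∈ Icc (-1:ℝ) 1) ∧ {x | 0 ≤ f x} ∈ 𝒢})
    (R Rφ : (X → ℝ) → ℝ)
    (hR : ∀ f, R f = ∫ x, (η x * (if (1:ℝ) * sgn (f x) ≤ 0 then (1:ℝ) else 0)
        + (1 - η x) * (if (-1:ℝ) * sgn (f x) ≤ 0 then (1:ℝ) else 0)) ∂μ)
    (hRφ : ∀ f, Rφ f = ∫ x, (η x * φ (f x) + (1 - η x) * φ (-(f x))) ∂μ) :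
    ∀ f ∈ F, c * (R f - sInf (R '' F)) ≤ Rφ f - sInf (Rφ '' F) := by
  intro f hf
  obtain ⟨hfm, hf1, -⟩ := hF ▸ hf
  obtain ⟨M, hM⟩ : ∃ M, ∀ a ∈ Icc (-1:ℝ) 1, |φ a| ≤ M := by
    simpa only [Real.norm_eq_abs] using isCompact_Icc.exists_bound_of_continuousOn hφc.continuousOn
  have hR' : ∀ g, R g = ∫ x, condZeroOneRisk (g x) (η x) ∂μ := fun g => by
    simp only [hR, condZeroOneRisk_eq]
  have hRφ' : ∀ g, Rφ g = ∫ x, condRisk φ (g x) (η x) ∂μ := fun g => by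
    simp only [hRφ, condRisk, mul_comm]
  have hbdd : BddBelow (Rφ '' F) := by
    refine ⟨-M, ?_⟩
    rintro _ ⟨g, hg, rfl⟩
    obtain ⟨-, hg1, -⟩ := hF ▸ hg
    linarith [abs_le.1 (abs_integral_condRisk_comp_le (μ := μ) hM hη01 hg1), hRφ' g]
  refine mul_sub_csInf_image_le hc hf fun g hg => le_of_forall_pos_le_add fun ε hε => ?_
  obtain ⟨hgm, -, hgG⟩ := hF ▸ hg
  obtain ⟨k, hkm, hkS, hle⟩ :=
    exists_mul_integral_condZeroOneRisk_sub_le hφc hM hη hη01 hΔ hfm hf1 hgm hε (μ := μ)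
  have hkF : k ∈ F := hF ▸ ⟨hkm, fun x => scoreSide_subset_Icc _ (hkS x), by
    simpa only [nonneg_iff_of_mem_scoreSide (hkS _)] using hgG⟩
  rw [hR' f, hR' g, hRφ' f]
  linarith [csInf_le hbdd ⟨k, hkF, rfl⟩, hRφ' k]

/-- Generalized Zhang inequality: if the surrogate loss `φ` satisfies
`ΔC_φ(η) = c (1 - 2η)` with `c > 0` for all `η ∈ [0,1]`, then for every classifier
`f` in the `𝒢`-constrained class `𝓕_𝒢` (measurable, range in `[-1,1]`, prediction set
`{x : f x ≥ 0} ∈ 𝒢`),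
`c (R(f) - inf_{g ∈ 𝓕_𝒢} R(g)) ≤ R_φ(f) - inf_{g ∈ 𝓕_𝒢} R_φ(g)`,
where `R` is the classification risk and `R_φ` the surrogate risk. -/
theorem generalized_zhang_inequality {X : Type*} [MeasurableSpace X]
    (μ : Measure X) [IsProbabilityMeasure μ]
    (η : X → ℝ) (hη : Measurable η) (hη01 : ∀ x, η x ∈ Icc (0:ℝ) 1)
    (𝒢 : Set (Set X)) (h𝒢 : ∀ G ∈ 𝒢, MeasurableSet G)
    (φ : ℝ → ℝ) (hφc : Continuous φ) (c : ℝ) (hc : 0 < c)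
    (hΔ : ∀ p ∈ Icc (0:ℝ) 1,
      sInf ((fun a => φ a * p + φ (-a) * (1 - p)) '' Icc (0:ℝ) 1) -
        sInf ((fun a => φ a * p + φ (-a) * (1 - p)) '' Ico (-1:ℝ) 0)
          = c * (1 - 2 * p))
    (F : Set (X → ℝ))
    (hF : F = {f | Measurable f ∧ (∀ x, f x ∈ Icc (-1:ℝ) 1) ∧ {x | 0 ≤ f x} ∈ 𝒢})
    (R Rφ : (X → ℝ) → ℝ)
    (hR : ∀ f, R f = ∫ x, (η x * (if (1:ℝ) * sgn (f x) ≤ 0 then (1:ℝ) else 0)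
        + (1 - η x) * (if (-1:ℝ) * sgn (f x) ≤ 0 then (1:ℝ) else 0)) ∂μ)
    (hRφ : ∀ f, Rφ f = ∫ x, (η x * φ (f x) + (1 - η x) * φ (-(f x))) ∂μ) :
    ∀ f ∈ F, c * (R f - sInf (R '' F)) ≤ Rφ f - sInf (Rφ '' F) :=
  generalized_zhang_inequality_general μ η hη hη01 𝒢 φ hφc c hc hΔ F hF R Rφ hR hRφ
end

section
/- Hinge risk of a step classifier: Let μ be a probability measure on X, η : X → [0,1] measurable, and for a measurable set G define 𝓡(G) = ∫ [η·1_{G^c} + (1−η)·1_G] dμ. Let f̃(x) = 2·Σ_{j=1}^J c_j·1{x ∈ G_j} − 1 with G_J ⊆ ⋯ ⊆ G_1 measurable, c_j ≥ 0, and Σ c_j = 1. Then the hinge risk R_{φ_h}(f̃) = E[max{0, 1 − Y f̃(X)}] satisfies R_{φ_h}(f̃) = 2·Σ_{j=1}^J c_j·𝓡(G_j). -/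
open MeasureTheory Set

/-!
On `[-1, 1]` the hinge loss is affine, so the hinge risk of `f` is `∫ 1 + (1 - 2η) f dμ`.
The classification risk of `G` is likewise `∫ η + (1 - 2η) 1_G dμ`, and since `f + 1` is the
convex combination `2 Σ c_j 1_{G_j}`, the two affine expressions match term by term.
-/

section Pointwise

variable {X : Type*}

lemma hinge_eq_of_mem_Icc (η : ℝ) {t : ℝ} (ht : t ∈ Icc (-1 : ℝ) 1) :
    η * max 0 (1 - t) + (1 - η) * max 0 (1 + t) = 1 + (1 - 2 * η) * t := by
  rw [max_eq_right (by linarith [ht.2]), max_eq_right (by linarith [ht.1])]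
  ring

lemma mul_indicator_compl_add_mul_indicator (η : ℝ) (S : Set X) (x : X) :
    η * Sᶜ.indicator (fun _ => (1 : ℝ)) x + (1 - η) * S.indicator (fun _ => (1 : ℝ)) x
      = η + (1 - 2 * η) * S.indicator (fun _ => (1 : ℝ)) x := by
  by_cases h : x ∈ S <;> simp [h]; ring

lemma sum_mul_indicator_mem_Icc {ι : Type*} [Fintype ι] {c : ι → ℝ} (hc : ∀ i, 0 ≤ c i)
    (hsum : ∑ i, c i = 1) (G : ι → Set X) (x : X) :
    ∑ i, c i * (G i).indicator (fun _ => (1 : ℝ)) x ∈ Icc 0 1 := by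
  have hI : ∀ i, (G i).indicator (fun _ => (1 : ℝ)) x ∈ Icc 0 1 := fun i => by
    by_cases h : x ∈ G i <;> simp [h]
  refine ⟨Finset.sum_nonneg fun i _ => mul_nonneg (hc i) (hI i).1, ?_⟩
  calc ∑ i, c i * (G i).indicator (fun _ => (1 : ℝ)) x ≤ ∑ i, c i :=
        Finset.sum_le_sum fun i _ => mul_le_of_le_one_right (hc i) (hI i).2
    _ = 1 := hsum

end Pointwise

lemma integrable_mul_indicator_compl_add_mul_indicator {X : Type*} [MeasurableSpace X]
    {μ : Measure X} [IsFiniteMeasure μ] {η : X → ℝ} (hη : Measurable η)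
    (hη01 : ∀ x, η x ∈ Icc (0 : ℝ) 1) {S : Set X} (hS : MeasurableSet S) :
    Integrable (fun x => η x * Sᶜ.indicator (fun _ => (1 : ℝ)) x
      + (1 - η x) * S.indicator (fun _ => (1 : ℝ)) x) μ := by
  refine Integrable.mono' (integrable_const (1 : ℝ)) ?_ (Filter.Eventually.of_forall fun x => ?_)
  · exact ((hη.mul (measurable_const.indicator hS.compl)).add
      ((measurable_const.sub hη).mul (measurable_const.indicator hS))).aestronglyMeasurable
  · obtain ⟨h0, h1⟩ := hη01 x
    by_cases h : x ∈ S <;> simp [h, abs_le] <;> constructor <;> linarith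

theorem hinge_risk_step_classifier_general {X : Type*} [MeasurableSpace X]
    (μ : Measure X) [IsProbabilityMeasure μ]
    (η : X → ℝ) (hη : Measurable η) (hη01 : ∀ x, η x ∈ Icc (0:ℝ) 1)
    (J : ℕ) (G : Fin J → Set X) (hGm : ∀ j, MeasurableSet (G j))
    (cw : Fin J → ℝ) (hcw : ∀ j, 0 ≤ cw j) (hsum : ∑ j, cw j = 1)
    (f : X → ℝ)
    (hf : ∀ x, f x = 2 * (∑ j, cw j * (G j).indicator (fun _ => (1:ℝ)) x) - 1)
    (RG : Set X → ℝ)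
    (hRG : ∀ S : Set X, RG S = ∫ x, (η x * Sᶜ.indicator (fun _ => (1:ℝ)) x
        + (1 - η x) * S.indicator (fun _ => (1:ℝ)) x) ∂μ) :
    (∫ x, (η x * max 0 (1 - f x) + (1 - η x) * max 0 (1 + f x)) ∂μ)
      = 2 * ∑ j, cw j * RG (G j) := by
  have hpointwise : ∀ x, η x * max 0 (1 - f x) + (1 - η x) * max 0 (1 + f x)
      = ∑ j, cw j * (2 * (η x * (G j)ᶜ.indicator (fun _ => (1 : ℝ)) x
          + (1 - η x) * (G j).indicator (fun _ => (1 : ℝ)) x)) := by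
    intro x
    obtain ⟨h0, h1⟩ := sum_mul_indicator_mem_Icc hcw hsum G x
    have hfx : f x ∈ Icc (-1 : ℝ) 1 := by rw [hf x]; constructor <;> linarith
    calc η x * max 0 (1 - f x) + (1 - η x) * max 0 (1 + f x)
        = 2 * η x * ∑ j, cw j
          + (1 - 2 * η x) * (2 * ∑ j, cw j * (G j).indicator (fun _ => (1 : ℝ)) x) := by
          rw [hinge_eq_of_mem_Icc _ hfx, hsum, hf x]; ring
      _ = _ := by
          simp only [mul_indicator_compl_add_mul_indicator, Finset.mul_sum,
            ← Finset.sum_add_distrib]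
          exact Finset.sum_congr rfl fun j _ => by ring
  rw [integral_congr_ae (Filter.Eventually.of_forall hpointwise), integral_finsetSum _
    fun j _ => ((integrable_mul_indicator_compl_add_mul_indicator hη hη01 (hGm j)).const_mul
      2).const_mul (cw j), Finset.mul_sum]
  refine Finset.sum_congr rfl fun j _ => ?_
  rw [integral_const_mul, integral_const_mul, hRG]
  ring

/-- Hinge risk of a nested step classifier
`f(x) = 2 Σ_j c_j 1{x ∈ G_j} - 1` (with `G_J ⊆ ⋯ ⊆ G_1`, `c_j ≥ 0`, `Σ c_j = 1`):
`E[max{0, 1 - Y f(X)}] = 2 Σ_j c_j 𝓡(G_j)`, where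
`𝓡(G) = ∫ [η 1_{Gᶜ} + (1-η) 1_G] dμ` is the classification risk of `G`. -/
theorem hinge_risk_step_classifier {X : Type*} [MeasurableSpace X]
    (μ : Measure X) [IsProbabilityMeasure μ]
    (η : X → ℝ) (hη : Measurable η) (hη01 : ∀ x, η x ∈ Icc (0:ℝ) 1)
    (J : ℕ) (hJ : 1 ≤ J) (G : Fin J → Set X) (hGm : ∀ j, MeasurableSet (G j))
    (hnest : ∀ i j : Fin J, i ≤ j → G j ⊆ G i)
    (cw : Fin J → ℝ) (hcw : ∀ j, 0 ≤ cw j) (hsum : ∑ j, cw j = 1)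
    (f : X → ℝ)
    (hf : ∀ x, f x = 2 * (∑ j, cw j * (G j).indicator (fun _ => (1:ℝ)) x) - 1)
    (RG : Set X → ℝ)
    (hRG : ∀ S : Set X, RG S = ∫ x, (η x * Sᶜ.indicator (fun _ => (1:ℝ)) x
        + (1 - η x) * S.indicator (fun _ => (1:ℝ)) x) ∂μ) :
    (∫ x, (η x * max 0 (1 - f x) + (1 - η x) * max 0 (1 + f x)) ∂μ)
      = 2 * ∑ j, cw j * RG (G j) :=
  hinge_risk_step_classifier_general μ η hη hη01 J G hGm cw hcw hsum f hf RG hRG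
end

section
/- Let μ be a probability measure on X, η : X → [0,1] measurable, 𝒢 a class of measurable subsets of X, and 𝓡(G) the classification risk of the prediction set G. Let 𝓕̃_{𝒢,J} be the class of step functions f(x) = 2Σ_{j=1}^J c_j 1{x ∈ G_j} − 1 with G_j ∈ 𝒢 nested (G_J ⊆ ⋯ ⊆ G_1), c_j ≥ 0, Σ c_j = 1. If G* minimizes 𝓡 over 𝒢, then f̃_{G*}(x) = 2·1{x ∈ G*} − 1 minimizes the hinge risk R_{φ_h} over 𝓕̃_{𝒢,J}, and inf_{f ∈ 𝓕̃_{𝒢,J}} R_{φ_h}(f) = 2·inf_{G ∈ 𝒢} 𝓡(G). -/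
/-!
Writing `s = ∑ⱼ cⱼ 1_{Gⱼ} ∈ [0, 1]`, the hinge loss of `f = 2s - 1` never clips, so it is
affine in `s`, and hence in the weights: pointwise it equals `∑ⱼ cⱼ · 2 ℓ(Gⱼ)` with `ℓ` the
classification loss. Integrating, `R_h(f) = 2 ∑ⱼ cⱼ 𝓡(Gⱼ)`, a convex combination of the values
`2 𝓡(Gⱼ)`, which is minimized by putting all weight on a minimizer `G*` of `𝓡`.
-/

open MeasureTheory Set

section StepClassifier

variable {X ι : Type*} [Fintype ι]

noncomputable def classificationLoss (η : X → ℝ) (S : Set X) (x : X) : ℝ :=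
  η x * Sᶜ.indicator (fun _ => (1 : ℝ)) x + (1 - η x) * S.indicator (fun _ => (1 : ℝ)) x

lemma classificationLoss_eq (η : X → ℝ) (S : Set X) (x : X) :
    classificationLoss η S x = η x + (1 - 2 * η x) * S.indicator (fun _ => (1 : ℝ)) x := by
  by_cases hx : x ∈ S <;> simp [classificationLoss, hx]; ring

lemma classificationLoss_mem_Icc {η : X → ℝ} (hη01 : ∀ x, η x ∈ Icc (0 : ℝ) 1)
    (S : Set X) (x : X) : classificationLoss η S x ∈ Icc (0 : ℝ) 1 := by
  obtain ⟨h0, h1⟩ := hη01 x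
  by_cases hx : x ∈ S <;> simp [classificationLoss, hx] <;> constructor <;> linarith

lemma integrable_classificationLoss [MeasurableSpace X] (μ : Measure X) [IsFiniteMeasure μ]
    {η : X → ℝ} (hη : Measurable η) (hη01 : ∀ x, η x ∈ Icc (0 : ℝ) 1)
    {S : Set X} (hS : MeasurableSet S) : Integrable (classificationLoss η S) μ := by
  have hmeas : Measurable (classificationLoss η S) :=
    (hη.mul (measurable_const.indicator hS.compl)).add
      ((measurable_const.sub hη).mul (measurable_const.indicator hS))
  refine (integrable_const (1 : ℝ)).mono' hmeas.aestronglyMeasurable (ae_of_all _ fun x => ?_)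
  obtain ⟨h0, h1⟩ := classificationLoss_mem_Icc hη01 S x
  rwa [Real.norm_of_nonneg h0]

lemma hinge_two_mul_sub_one {s : ℝ} (hs : s ∈ Icc (0 : ℝ) 1) (η : ℝ) :
    η * max 0 (1 - (2 * s - 1)) + (1 - η) * max 0 (1 + (2 * s - 1))
      = 2 * (η + (1 - 2 * η) * s) := by
  obtain ⟨h0, h1⟩ := hs
  rw [max_eq_right (by linarith), max_eq_right (by linarith)]
  ring

lemma weighted_indicator_sum_mem_Icc {cw : ι → ℝ} (hcw : cw ∈ stdSimplex ℝ ι)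
    (G : ι → Set X) (x : X) :
    ∑ j, cw j * (G j).indicator (fun _ => (1 : ℝ)) x ∈ Icc (0 : ℝ) 1 := by
  have hterm : ∀ j, cw j * (G j).indicator (fun _ => (1 : ℝ)) x ∈ Icc 0 (cw j) := fun j => by
    by_cases hx : x ∈ G j <;> simp [hx, hcw.1 j]
  exact ⟨Finset.sum_nonneg fun j _ => (hterm j).1,
    (Finset.sum_le_sum fun j _ => (hterm j).2).trans_eq hcw.2⟩

lemma hinge_step_eq_sum_classificationLoss {cw : ι → ℝ} (hcw : cw ∈ stdSimplex ℝ ι)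
    (G : ι → Set X) (η : X → ℝ) (x : X) :
    let s := ∑ j, cw j * (G j).indicator (fun _ => (1 : ℝ)) x
    η x * max 0 (1 - (2 * s - 1)) + (1 - η x) * max 0 (1 + (2 * s - 1))
      = ∑ j, cw j * (2 * classificationLoss η (G j) x) := by
  intro s
  have hterm : ∀ j, cw j * (2 * classificationLoss η (G j) x) = 2 * η x * cw j
      + 2 * (1 - 2 * η x) * (cw j * (G j).indicator (fun _ => (1 : ℝ)) x) := fun j => by
    rw [classificationLoss_eq]; ring
  rw [hinge_two_mul_sub_one (weighted_indicator_sum_mem_Icc hcw G x),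
    Finset.sum_congr rfl fun j _ => hterm j, Finset.sum_add_distrib, ← Finset.mul_sum,
    ← Finset.mul_sum, hcw.2]
  ring

lemma integral_hinge_step [MeasurableSpace X] (μ : Measure X) [IsFiniteMeasure μ]
    {η : X → ℝ} (hη : Measurable η) (hη01 : ∀ x, η x ∈ Icc (0 : ℝ) 1)
    {G : ι → Set X} (hG : ∀ j, MeasurableSet (G j)) {cw : ι → ℝ} (hcw : cw ∈ stdSimplex ℝ ι)
    {f : X → ℝ} (hf : ∀ x, f x = 2 * (∑ j, cw j * (G j).indicator (fun _ => (1 : ℝ)) x) - 1) :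
    ∫ x, (η x * max 0 (1 - f x) + (1 - η x) * max 0 (1 + f x)) ∂μ
      = ∑ j, cw j * (2 * ∫ x, classificationLoss η (G j) x ∂μ) := by
  simp_rw [hf, hinge_step_eq_sum_classificationLoss hcw G η]
  rw [integral_finsetSum _ fun j _ =>
    ((integrable_classificationLoss μ hη hη01 (hG j)).const_mul 2).const_mul (cw j)]
  simp only [integral_const_mul]

end StepClassifier

/-- If `G*` minimizes the classification risk `𝓡` over `𝒢`, then the step classifier
`f̃_{G*}(x) = 2·1{x ∈ G*} - 1` minimizes the hinge risk over the class `𝓕̃_{𝒢,J}` of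
nested step classifiers built from `𝒢`, and the minimal hinge risk over that class
equals `2 inf_{G ∈ 𝒢} 𝓡(G)`. -/
theorem step_classifier_minimizes_hinge {X : Type*} [MeasurableSpace X]
    (μ : Measure X) [IsProbabilityMeasure μ]
    (η : X → ℝ) (hη : Measurable η) (hη01 : ∀ x, η x ∈ Icc (0:ℝ) 1)
    (𝒢 : Set (Set X)) (h𝒢 : ∀ G ∈ 𝒢, MeasurableSet G)
    (J : ℕ) (hJ : 1 ≤ J)
    (RG : Set X → ℝ)
    (hRG : ∀ S : Set X, RG S = ∫ x, (η x * Sᶜ.indicator (fun _ => (1:ℝ)) x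
        + (1 - η x) * S.indicator (fun _ => (1:ℝ)) x) ∂μ)
    (Rh : (X → ℝ) → ℝ)
    (hRh : ∀ f, Rh f = ∫ x, (η x * max 0 (1 - f x)
        + (1 - η x) * max 0 (1 + f x)) ∂μ)
    (F : Set (X → ℝ))
    (hF : F = {f | ∃ (G : Fin J → Set X) (cw : Fin J → ℝ),
        (∀ j, G j ∈ 𝒢) ∧ (∀ i j : Fin J, i ≤ j → G j ⊆ G i) ∧
        (∀ j, 0 ≤ cw j) ∧ (∑ j, cw j = 1) ∧
        ∀ x, f x = 2 * (∑ j, cw j * (G j).indicator (fun _ => (1:ℝ)) x) - 1})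
    (Gstar : Set X) (hGs : Gstar ∈ 𝒢) (hGsmin : ∀ G ∈ 𝒢, RG Gstar ≤ RG G) :
    (fun x => 2 * Gstar.indicator (fun _ => (1:ℝ)) x - 1) ∈ F ∧
    (∀ f ∈ F, Rh (fun x => 2 * Gstar.indicator (fun _ => (1:ℝ)) x - 1) ≤ Rh f) ∧
    sInf (Rh '' F) = 2 * sInf (RG '' 𝒢) := by
  set fstar : X → ℝ := fun x => 2 * Gstar.indicator (fun _ => (1:ℝ)) x - 1
  have hRG' : ∀ S, RG S = ∫ x, classificationLoss η S x ∂μ := hRG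
  have hRh_fstar : Rh fstar = 2 * RG Gstar := by
    rw [hRh, integral_hinge_step μ hη hη01 (G := fun _ : Unit => Gstar) (fun _ => h𝒢 _ hGs)
      (single_mem_stdSimplex ℝ ()) (fun x => by simp [fstar]), hRG']
    simp
  have hfstar : fstar ∈ F := by
    obtain ⟨hw0, hw1⟩ := single_mem_stdSimplex ℝ (⟨0, hJ⟩ : Fin J)
    exact hF ▸ ⟨fun _ => Gstar, _, fun _ => hGs, fun _ _ _ => subset_rfl, hw0, hw1,
      fun x => by rw [← Finset.sum_mul, hw1, one_mul]⟩
  have hmin : ∀ f ∈ F, Rh fstar ≤ Rh f := by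
    rw [hF]
    rintro f ⟨G, cw, hG, -, hcw0, hcw1, hf⟩
    rw [hRh_fstar, hRh f, integral_hinge_step μ hη hη01 (fun j => h𝒢 _ (hG j)) ⟨hcw0, hcw1⟩ hf]
    calc 2 * RG Gstar = ∑ j, cw j * (2 * RG Gstar) := by rw [← Finset.sum_mul, hcw1, one_mul]
      _ ≤ ∑ j, cw j * (2 * ∫ x, classificationLoss η (G j) x ∂μ) :=
        Finset.sum_le_sum fun j _ => mul_le_mul_of_nonneg_left
          (by rw [← hRG']; linarith [hGsmin _ (hG j)]) (hcw0 j)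
  have hRh_least : IsLeast (Rh '' F) (Rh fstar) := ⟨mem_image_of_mem Rh hfstar, by
    rintro _ ⟨f, hf, rfl⟩; exact hmin f hf⟩
  have hRG_least : IsLeast (RG '' 𝒢) (RG Gstar) := ⟨mem_image_of_mem RG hGs, by
    rintro _ ⟨G, hG, rfl⟩; exact hGsmin G hG⟩
  exact ⟨hfstar, hmin, by rw [hRh_least.csInf_eq, hRG_least.csInf_eq, hRh_fstar]⟩
end

section
/- Binarizing Bernstein coefficients preserves empirical hinge-risk optimality (one-dimensional case): Let b_{kj}(x) = C(k, j) x^j (1−x)^{k−j} be the Bernstein basis on [0,1], and for θ ∈ [−1,1]^{k+1} with nondecreasing coordinates let B(θ, x) = Σ_{j=0}^k θ_j b_{kj}(x). Given data (y_i, x_i) ∈ {−1,1} × [0,1], i = 1, …, n, suppose θ̂ maximizes L(θ) = Σ_i y_i B(θ, x_i) over the polytope Θ̃ = {θ ∈ [−1,1]^{k+1} : θ_0 ≤ θ_1 ≤ ⋯ ≤ θ_k}. Then the vector θ† with θ†_j = sign(θ̂_j) ∈ {−1, 1} also lies in Θ̃ and maximizes L over Θ̃. -/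
/-! If `a` maximizes a linear functional `φ` on the polytope of monotone vectors in `[-1,1]^ι`
and `s` is its coordinatewise sign vector, then for small `t > 0` the extrapolated point
`(1 + t) • a - t • s` stays in the polytope: on the coordinates where `a ≥ 0` it applies
`x ↦ (1 + t) x - t`, which maps `[0, 1]` into `[-t, 1]`, symmetrically where `a < 0`, and
monotonicity can only break across the sign change of `a`, where the gap `-a i > 0` absorbs the
relative shift `2 t`. Maximality then gives `(1 + t) φ a - t φ s ≤ φ a`, i.e. `φ a ≤ φ s`. -/

open Set Filter Topology

theorem IsLinearMap.le_of_isMaxOn_of_extrapolate_mem {E : Type*} [AddCommGroup E] [Module ℝ E]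
    {φ : E → ℝ} (hφ : IsLinearMap ℝ φ) {S : Set E} {a s : E} (hmax : IsMaxOn φ S a)
    {t : ℝ} (ht : 0 < t) (hmem : (1 + t) • a - t • s ∈ S) : φ a ≤ φ s := by
  have h := isMaxOn_iff.mp hmax _ hmem
  rw [hφ.map_sub, hφ.map_smul, hφ.map_smul, smul_eq_mul, smul_eq_mul] at h
  nlinarith

theorem isLinearMap_sum_mul_sum {ι κ : Type*} [Fintype ι] [Fintype κ] (y : ι → ℝ)
    (c : ι → κ → ℝ) : IsLinearMap ℝ fun θ : κ → ℝ => ∑ i, y i * ∑ j, θ j * c i j where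
  map_add θ θ' := by
    simp only [Pi.add_apply, add_mul, Finset.sum_add_distrib, mul_add]
  map_smul r θ := by
    simp only [Pi.smul_apply, smul_eq_mul, Finset.mul_sum]
    exact Finset.sum_congr rfl fun i _ => Finset.sum_congr rfl fun j _ => by ring

section MonotoneBox

variable {ι : Type*} [Preorder ι]

def monotoneBox (ι : Type*) [Preorder ι] : Set (ι → ℝ) :=
  {θ | (∀ j, θ j ∈ Icc (-1 : ℝ) 1) ∧ Monotone θ}

noncomputable def binarize (a : ι → ℝ) : ι → ℝ := fun j => if 0 ≤ a j then 1 else -1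

theorem binarize_mem_monotoneBox {a : ι → ℝ} (ha : Monotone a) :
    binarize a ∈ monotoneBox ι := by
  refine ⟨fun j => ?_, fun i j hij => ?_⟩
  · unfold binarize
    split_ifs <;> norm_num
  · unfold binarize
    by_cases hi : 0 ≤ a i
    · simp [hi, hi.trans (ha hij)]
    · rw [if_neg hi]
      split_ifs <;> norm_num

theorem extrapolate_binarize_mem_monotoneBox {a : ι → ℝ} (ha : a ∈ monotoneBox ι) {t : ℝ}
    (ht₀ : 0 ≤ t) (ht₁ : t ≤ 1) (hgap : ∀ i, a i < 0 → 2 * t ≤ -a i) :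
    (1 + t) • a - t • binarize a ∈ monotoneBox ι := by
  obtain ⟨hbox, hmono⟩ := ha
  refine ⟨fun j => ?_, fun i j hij => ?_⟩ <;>
    simp only [binarize, mem_Icc, Pi.sub_apply, Pi.smul_apply, smul_eq_mul]
  · obtain ⟨hlo, hhi⟩ := hbox j
    split_ifs with hj
    · constructor <;> nlinarith
    · constructor <;> nlinarith
  · have haij := hmono hij
    split_ifs with hi hj hj
    · nlinarith
    · linarith
    · nlinarith [hgap i (not_le.mp hi)]
    · nlinarith

theorem exists_pos_extrapolate_binarize_mem_monotoneBox [Finite ι] {a : ι → ℝ}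
    (ha : a ∈ monotoneBox ι) :
    ∃ t : ℝ, 0 < t ∧ (1 + t) • a - t • binarize a ∈ monotoneBox ι := by
  have hsmall : ∀ᶠ t in 𝓝 (0 : ℝ), t ≤ 1 ∧ ∀ i, a i < 0 → 2 * t ≤ -a i := by
    refine (eventually_le_nhds one_pos).and (eventually_all.mpr fun i => ?_)
    by_cases hi : a i < 0
    · filter_upwards [eventually_lt_nhds (by linarith : (0 : ℝ) < -a i / 2)] with t ht _
      linarith
    · exact .of_forall fun t h => absurd h hi
  obtain ⟨t, ⟨ht₁, hgap⟩, ht₀⟩ :=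
    (hsmall.filter_mono nhdsWithin_le_nhds |>.and (self_mem_nhdsWithin (s := Ioi 0))).exists
  exact ⟨t, ht₀, extrapolate_binarize_mem_monotoneBox ha ht₀.le ht₁ hgap⟩

end MonotoneBox

theorem bernstein_binarize_optimal_general (k n : ℕ) (y x : Fin n → ℝ)
    (Θ : Set (Fin (k + 1) → ℝ))
    (hΘ : Θ = {θ | (∀ j, θ j ∈ Icc (-1:ℝ) 1) ∧ Monotone θ})
    (L : (Fin (k + 1) → ℝ) → ℝ)
    (hL : ∀ θ, L θ = ∑ i, y i * ∑ j : Fin (k + 1),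
        θ j * ((k.choose (j : ℕ) : ℝ) * x i ^ (j : ℕ) * (1 - x i) ^ (k - (j : ℕ))))
    (θhat : Fin (k + 1) → ℝ) (hθhat : θhat ∈ Θ) (hmax : ∀ θ ∈ Θ, L θ ≤ L θhat)
    (θdag : Fin (k + 1) → ℝ)
    (hθdag : ∀ j, θdag j = if 0 ≤ θhat j then 1 else -1) :
    θdag ∈ Θ ∧ ∀ θ ∈ Θ, L θ ≤ L θdag := by
  change Θ = monotoneBox _ at hΘ
  obtain rfl : θdag = binarize θhat := funext hθdag
  subst hΘ
  have hLlin : IsLinearMap ℝ L := by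
    rw [show L = _ from funext hL]
    exact isLinearMap_sum_mul_sum _ _
  obtain ⟨t, ht, hmem⟩ := exists_pos_extrapolate_binarize_mem_monotoneBox hθhat
  have hopt : L θhat ≤ L (binarize θhat) :=
    hLlin.le_of_isMaxOn_of_extrapolate_mem (isMaxOn_iff.mpr hmax) ht hmem
  exact ⟨binarize_mem_monotoneBox hθhat.2, fun θ hθ => (hmax θ hθ).trans hopt⟩

/-- Binarizing Bernstein coefficients preserves empirical hinge-risk optimality
(one-dimensional case): if `θ̂` maximizes the linear objective
`L(θ) = Σ_i y_i Σ_j θ_j C(k,j) x_i^j (1 - x_i)^{k-j}` over the polytope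
`Θ̃ = {θ ∈ [-1,1]^{k+1} : θ_0 ≤ ⋯ ≤ θ_k}`, then `θ†` with `θ†_j = sign(θ̂_j)`
also lies in `Θ̃` and maximizes `L` over `Θ̃`. -/
theorem bernstein_binarize_optimal (k n : ℕ) (y x : Fin n → ℝ)
    (hy : ∀ i, y i = 1 ∨ y i = -1) (hx : ∀ i, x i ∈ Icc (0:ℝ) 1)
    (Θ : Set (Fin (k + 1) → ℝ))
    (hΘ : Θ = {θ | (∀ j, θ j ∈ Icc (-1:ℝ) 1) ∧ Monotone θ})
    (L : (Fin (k + 1) → ℝ) → ℝ)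
    (hL : ∀ θ, L θ = ∑ i, y i * ∑ j : Fin (k + 1),
        θ j * ((k.choose (j : ℕ) : ℝ) * x i ^ (j : ℕ) * (1 - x i) ^ (k - (j : ℕ))))
    (θhat : Fin (k + 1) → ℝ) (hθhat : θhat ∈ Θ) (hmax : ∀ θ ∈ Θ, L θ ≤ L θhat)
    (θdag : Fin (k + 1) → ℝ)
    (hθdag : ∀ j, θdag j = if 0 ≤ θhat j then 1 else -1) :
    θdag ∈ Θ ∧ ∀ θ ∈ Θ, L θ ≤ L θdag :=
  bernstein_binarize_optimal_general k n y x Θ hΘ L hL θhat hθhat hmax θdag hθdag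
end
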